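/- In the graph G of the previous construction (split graph G' with clique A and independent set B, edges inside A deleted, new vertices x,y with y adjacent to x and to all of A): every dominating set of G contains x or y, and if D is a dominating set of G with D \ {x,y} ⊆ A, then D ∩ A is a dominating set of the original split graph G'. -/

import Mathlib

def Dominates {V : Type*} (G : SimpleGraph V) (D : Set V) : Prop :=
  ∀ v, ∃ d ∈ D, d = v ∨ G.Adj d v

def bipOf {V : Type*} (G' : SimpleGraph V) (A : Set V) : SimpleGraph (V ⊕ Bool) where
  Adj a b :=
    match a, b with
    | Sum.inl u, Sum.inl v => G'.Adj u v ∧ ¬ (u ∈ A ∧ v ∈ A)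
    | Sum.inl u, Sum.inr b => b = true ∧ u ∈ A
    | Sum.inr b, Sum.inl u => b = true ∧ u ∈ A
    | Sum.inr b, Sum.inr c => b ≠ c
  symm := by constructor; rintro (u | b) (v | c) h <;> simp_all [SimpleGraph.adj_comm, Ne, eq_comm] <;> tauto
  loopless := by constructor; rintro (u | b) h <;> simp_all

/-! In `bipOf G' A` the new vertices are `x = Sum.inr false` and `y = Sum.inr true`. -/

namespace bipOf

variable {V : Type*} {G' : SimpleGraph V} {A : Set V}

theorem adj_inr_false_iff {d : V ⊕ Bool} :
    (bipOf G' A).Adj d (Sum.inr false) ↔ d = Sum.inr true := by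
  rcases d with u | (_ | _) <;> simp [bipOf]

theorem adj_inl_iff_of_notMem {v : V} (hv : v ∉ A) {d : V ⊕ Bool} :
    (bipOf G' A).Adj d (Sum.inl v) ↔ ∃ u, d = Sum.inl u ∧ G'.Adj u v := by
  rcases d with u | b <;> simp [bipOf, hv]

end bipOf

theorem SimpleGraph.IsClique.exists_mem_eq_or_adj {V : Type*} {G : SimpleGraph V} {A D : Set V}
    (hA : G.IsClique A) {a : V} (ha : a ∈ A) (haD : a ∈ D) {v : V} (hv : v ∈ A) :
    ∃ d ∈ D, d = v ∨ G.Adj d v := by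
  obtain rfl | hav := eq_or_ne a v
  · exact ⟨a, haD, Or.inl rfl⟩
  · exact ⟨a, haD, Or.inr (hA ha hv hav)⟩

section

variable {V : Type*} {G' : SimpleGraph V} {A : Set V} {D : Set (V ⊕ Bool)}

theorem Dominates.inr_false_mem_or_inr_true_mem (hD : Dominates (bipOf G' A) D) :
    Sum.inr false ∈ D ∨ Sum.inr true ∈ D := by
  obtain ⟨d, hd, rfl | hadj⟩ := hD (Sum.inr false)
  · exact Or.inl hd
  · rw [bipOf.adj_inr_false_iff] at hadj
    exact Or.inr (hadj ▸ hd)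

theorem Dominates.restrict_of_bipOf (hclique : G'.IsClique A) (hD : Dominates (bipOf G' A) D)
    (hsub : ∀ v : V, Sum.inl v ∈ D → v ∈ A) (hmeet : ∃ a ∈ A, Sum.inl a ∈ D) :
    Dominates G' {v | v ∈ A ∧ Sum.inl v ∈ D} := by
  obtain ⟨a, haA, haD⟩ := hmeet
  intro v
  by_cases hvA : v ∈ A
  · exact hclique.exists_mem_eq_or_adj (D := {v | v ∈ A ∧ Sum.inl v ∈ D})
      haA ⟨haA, haD⟩ hvA
  · obtain ⟨d, hd, hdv | hadj⟩ := hD (Sum.inl v)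
    · exact absurd (hsub v (hdv ▸ hd)) hvA
    · obtain ⟨u, rfl, huv⟩ := (bipOf.adj_inl_iff_of_notMem hvA).1 hadj
      exact ⟨u, ⟨hsub u hd, hd⟩, Or.inr huv⟩

end

theorem dominating_bip_properties_general {V : Type*} (G' : SimpleGraph V) (A : Set V)
    (hclique : ∀ a ∈ A, ∀ b ∈ A, a ≠ b → G'.Adj a b) :
    (∀ D : Set (V ⊕ Bool), Dominates (bipOf G' A) D →
      Sum.inr false ∈ D ∨ Sum.inr true ∈ D) ∧
    (∀ D : Set (V ⊕ Bool), Dominates (bipOf G' A) D →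
      (∀ v : V, Sum.inl v ∈ D → v ∈ A) → (∃ a ∈ A, Sum.inl a ∈ D) →
      Dominates G' {v | v ∈ A ∧ Sum.inl v ∈ D}) :=
  ⟨fun _ hD => hD.inr_false_mem_or_inr_true_mem,
    fun _ hD => hD.restrict_of_bipOf hclique⟩

/-- In the modified graph (`x = inr false`, `y = inr true`): every dominating set
contains `x` or `y`; and a dominating set `D` with `D \ {x, y} ⊆ A` intersecting `A`
induces a dominating set `D ∩ A` of the original split graph `G'`. -/
theorem dominating_bip_properties {V : Type*} (G' : SimpleGraph V) (A B : Set V)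
    (hunion : A ∪ B = Set.univ) (hdisj : A ∩ B = ∅) (hA : A.Nonempty)
    (hclique : ∀ a ∈ A, ∀ b ∈ A, a ≠ b → G'.Adj a b)
    (hindep : ∀ a ∈ B, ∀ b ∈ B, ¬ G'.Adj a b) :
    (∀ D : Set (V ⊕ Bool), Dominates (bipOf G' A) D →
      Sum.inr false ∈ D ∨ Sum.inr true ∈ D) ∧
    (∀ D : Set (V ⊕ Bool), Dominates (bipOf G' A) D →
      (∀ v : V, Sum.inl v ∈ D → v ∈ A) → (∃ a ∈ A, Sum.inl a ∈ D) →
      Dominates G' {v | v ∈ A ∧ Sum.inl v ∈ D}) :=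
  dominating_bip_properties_general G' A hclique
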